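/- arXiv:hep-th/9708148 — 2 statements merged into one kernel-verified Lean document; each statement's English description precedes it below -/
import Mathlib

section
/- A polynomial f(z₁,…,z_N) over ℂ that is symmetric separately in (z₁,…,z_n) and in (z_{n+1},…,z_N), and of degree at most l−1 in each of z₁,…,z_n (where l=N−n), is uniquely determined by its restrictions to the nl hyperplanes obtained by setting z_N=z_j q⁻² for j=1,…,n (after relabeling via the symmetry), provided q⁻² is not a root of unity of small order; more precisely: if two such polynomials f,g of degree ≤ l−1 in z_n satisfy f=g on the hyperplane z_N=z_n q⁻² together with the stated symmetries, and l distinct specializations arise, then f=g. -/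
open MvPolynomial

lemma eval_aeval_poly {N : ℕ} (v : Fin N → Polynomial ℂ) (h : MvPolynomial (Fin N) ℂ) (t : ℂ) :
    Polynomial.eval t (MvPolynomial.aeval v h) =
      MvPolynomial.eval (fun j => Polynomial.eval t (v j)) h := by
  rw [MvPolynomial.aeval_def]
  rw [show Polynomial.eval t (MvPolynomial.eval₂ (algebraMap ℂ (Polynomial ℂ)) v h)
      = (Polynomial.evalRingHom t) (MvPolynomial.eval₂ (algebraMap ℂ (Polynomial ℂ)) v h) from rfl]
  rw [MvPolynomial.eval₂_comp_left (Polynomial.evalRingHom t)]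
  have hc : (Polynomial.evalRingHom t).comp (algebraMap ℂ (Polynomial ℂ)) = RingHom.id ℂ := by
    ext a; simp
  rw [hc]
  rfl

lemma natDegree_aeval_le {N : ℕ} (z : Fin N → ℂ) (i : Fin N) (h : MvPolynomial (Fin N) ℂ) :
    (MvPolynomial.aeval (fun j => if j = i then Polynomial.X else Polynomial.C (z j)) h).natDegree
      ≤ h.degreeOf i := by
  conv_lhs => rw [h.as_sum]
  rw [map_sum]
  apply Polynomial.natDegree_sum_le_of_forall_le
  intro m hm
  rw [MvPolynomial.aeval_monomial]
  refine le_trans (Polynomial.natDegree_mul_le.trans ?_) (MvPolynomial.monomial_le_degreeOf i hm)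
  have h1 : (algebraMap ℂ (Polynomial ℂ) (MvPolynomial.coeff m h)).natDegree = 0 := by
    simp [Polynomial.algebraMap_eq]
  rw [h1, zero_add]
  rw [Finsupp.prod]
  refine le_trans (Polynomial.natDegree_prod_le _ _) ?_
  calc ∑ j ∈ m.support, ((if j = i then Polynomial.X else Polynomial.C (z j)) ^ m j).natDegree
      ≤ ∑ j ∈ m.support, (if j = i then m j else 0) := by
        apply Finset.sum_le_sum
        intro j _
        by_cases hji : j = i <;> simp [hji]
    _ ≤ m i := by
        rw [Finset.sum_ite_eq' m.support i (fun j => m j)]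
        split <;> simp

set_option maxHeartbeats 1000000 in
/-- Uniqueness of a bi-symmetric polynomial of bounded degree from its restriction
to the hyperplane z_N = q⁻² z_n (which, via the symmetries, gives the nl
specializations), provided q⁻² is not a root of unity of small order. -/
theorem stmt_4 (q : ℂ) (hq : q ≠ 0) (hq1 : q ^ 2 ≠ 1)
    (n l N : ℕ) (hn : 0 < n) (hl : 0 < l) (hN : N = n + l)
    (hroot : ∀ k : ℕ, 1 ≤ k → k ≤ N → ((q ^ 2)⁻¹) ^ k ≠ 1)
    (f g : MvPolynomial (Fin N) ℂ)
    (hsymf₁ : ∀ i j : Fin N, (i : ℕ) < n → (j : ℕ) < n →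
      MvPolynomial.rename (Equiv.swap i j) f = f)
    (hsymf₂ : ∀ i j : Fin N, n ≤ (i : ℕ) → n ≤ (j : ℕ) →
      MvPolynomial.rename (Equiv.swap i j) f = f)
    (hsymg₁ : ∀ i j : Fin N, (i : ℕ) < n → (j : ℕ) < n →
      MvPolynomial.rename (Equiv.swap i j) g = g)
    (hsymg₂ : ∀ i j : Fin N, n ≤ (i : ℕ) → n ≤ (j : ℕ) →
      MvPolynomial.rename (Equiv.swap i j) g = g)
    (hdegf : ∀ i : Fin N, (i : ℕ) < n → f.degreeOf i ≤ l - 1)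
    (hdegg : ∀ i : Fin N, (i : ℕ) < n → g.degreeOf i ≤ l - 1)
    (heq : ∀ z : Fin N → ℂ,
      z ⟨N - 1, by omega⟩ = (q ^ 2)⁻¹ * z ⟨n - 1, by omega⟩ →
      MvPolynomial.eval z f = MvPolynomial.eval z g) :
    f = g := by
  have hq2 : (q : ℂ) ^ 2 ≠ 0 := pow_ne_zero 2 hq
  have hNpos : 0 < N := by omega
  set i₀ : Fin N := ⟨n - 1, by omega⟩ with hi₀
  set iN : Fin N := ⟨N - 1, by omega⟩ with hiN
  have hi₀n : (i₀ : ℕ) < n := by simp [hi₀]; omega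
  have hiNn : n ≤ (iN : ℕ) := by simp [hiN]; omega
  have hi₀iN : i₀ ≠ iN := by
    intro hcon
    have := congrArg Fin.val hcon
    simp [hi₀, hiN] at this
    omega
  -- Step 1: f = g pointwise at points whose last-block coordinates are pairwise distinct
  have key : ∀ z : Fin N → ℂ,
      (∀ j k : Fin N, n ≤ (j : ℕ) → n ≤ (k : ℕ) → j ≠ k → z j ≠ z k) →
      MvPolynomial.eval z f = MvPolynomial.eval z g := by
    intro z hz
    set v : Fin N → Polynomial ℂ := fun j => if j = i₀ then Polynomial.X else Polynomial.C (z j)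
      with hv
    set Qf : Polynomial ℂ := MvPolynomial.aeval v f with hQf
    set Qg : Polynomial ℂ := MvPolynomial.aeval v g with hQg
    -- evaluation of Qf, Qg at a point x
    have hev : ∀ (h : MvPolynomial (Fin N) ℂ) (x : ℂ),
        Polynomial.eval x (MvPolynomial.aeval v h) =
          MvPolynomial.eval (fun m => if m = i₀ then x else z m) h := by
      intro h x
      rw [eval_aeval_poly]
      have hfun : (fun j : Fin N => Polynomial.eval x (v j))
          = (fun m => if m = i₀ then x else z m) := by
        funext m; by_cases hm : m = i₀ <;> simp [hv, hm]
      rw [hfun]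
    -- the l specializations kill Qf - Qg
    have hzero : Qf - Qg = 0 := by
      apply Polynomial.eq_zero_of_natDegree_lt_card_of_eval_eq_zero (Qf - Qg)
        (f := fun k : Fin l => q ^ 2 * z ⟨n + (k : ℕ), by omega⟩)
      · -- injectivity
        intro a b hab
        simp only at hab
        have h1 := mul_left_cancel₀ hq2 hab
        by_contra hne
        have hne' : (⟨n + (a : ℕ), by omega⟩ : Fin N) ≠ ⟨n + (b : ℕ), by omega⟩ := by
          intro hcon
          have := congrArg Fin.val hcon
          simp at this
          exact hne (Fin.ext this)
        exact hz _ _ (by simp) (by simp) hne' h1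
      · -- evaluations vanish
        intro k
        set j : Fin N := ⟨n + (k : ℕ), by omega⟩ with hj
        have hjn : n ≤ (j : ℕ) := by simp [hj]
        have hji₀ : j ≠ i₀ := by
          intro hcon
          have := congrArg Fin.val hcon
          simp [hj, hi₀] at this
          omega
        have hi₀j : i₀ ≠ j := fun hcon => hji₀ hcon.symm
        -- the point after substituting x = q² z j
        set w : Fin N → ℂ := fun m => if m = i₀ then q ^ 2 * z j else z m with hw
        have hwf : Polynomial.eval (q ^ 2 * z j) Qf = MvPolynomial.eval w f := hev f _
        have hwg : Polynomial.eval (q ^ 2 * z j) Qg = MvPolynomial.eval w g := hev g _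
        -- use the symmetry swapping j and iN
        have hfs := hsymf₂ j iN hjn hiNn
        have hgs := hsymg₂ j iN hjn hiNn
        have hwfs : MvPolynomial.eval w f =
            MvPolynomial.eval (w ∘ Equiv.swap j iN) f := by
          conv_lhs => rw [← hfs]
          rw [MvPolynomial.eval_rename]
        have hwgs : MvPolynomial.eval w g =
            MvPolynomial.eval (w ∘ Equiv.swap j iN) g := by
          conv_lhs => rw [← hgs]
          rw [MvPolynomial.eval_rename]
        have hcond : (w ∘ Equiv.swap j iN) ⟨N - 1, by omega⟩ =
            (q ^ 2)⁻¹ * (w ∘ Equiv.swap j iN) ⟨n - 1, by omega⟩ := by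
          have h1 : (w ∘ Equiv.swap j iN) iN = z j := by
            simp only [Function.comp_apply, Equiv.swap_apply_right]
            simp [hw, hji₀]
          have h2 : (w ∘ Equiv.swap j iN) i₀ = q ^ 2 * z j := by
            simp only [Function.comp_apply, Equiv.swap_apply_of_ne_of_ne hi₀j hi₀iN]
            simp [hw]
          show (w ∘ Equiv.swap j iN) iN = (q ^ 2)⁻¹ * (w ∘ Equiv.swap j iN) i₀
          rw [h1, h2, ← mul_assoc, inv_mul_cancel₀ hq2, one_mul]
        have := heq (w ∘ Equiv.swap j iN) hcond
        simp only [Polynomial.eval_sub, hwf, hwg, hwfs, hwgs, this, sub_self]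
      · -- degree bound
        have h1 : Qf.natDegree ≤ l - 1 :=
          le_trans (natDegree_aeval_le z i₀ f) (hdegf i₀ hi₀n)
        have h2 : Qg.natDegree ≤ l - 1 :=
          le_trans (natDegree_aeval_le z i₀ g) (hdegg i₀ hi₀n)
        have := Polynomial.natDegree_sub_le Qf Qg
        simp only [Fintype.card_fin]
        omega
    -- conclude at the point z itself
    have h1 : MvPolynomial.eval z f = Polynomial.eval (z i₀) Qf := by
      rw [hev f (z i₀)]
      have hfun : (fun m : Fin N => if m = i₀ then z i₀ else z m) = z := by
        funext m; by_cases hm : m = i₀ <;> simp [hm]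
      rw [hfun]
    have h2 : MvPolynomial.eval z g = Polynomial.eval (z i₀) Qg := by
      rw [hev g (z i₀)]
      have hfun : (fun m : Fin N => if m = i₀ then z i₀ else z m) = z := by
        funext m; by_cases hm : m = i₀ <;> simp [hm]
      rw [hfun]
    have hQQ : Qf = Qg := sub_eq_zero.mp hzero
    rw [h1, h2, hQQ]
  -- Step 2: extend to all points by a one-parameter perturbation
  apply MvPolynomial.funext
  intro z
  set P : Polynomial ℂ :=
    MvPolynomial.aeval (fun j : Fin N => Polynomial.C (z j) +
      Polynomial.C ((j : ℕ) : ℂ) * Polynomial.X) (f - g) with hP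
  have hPev : ∀ t : ℂ, Polynomial.eval t P =
      MvPolynomial.eval (fun j => z j + ((j : ℕ) : ℂ) * t) (f - g) := by
    intro t
    rw [hP, eval_aeval_poly]
    have hfun : (fun j : Fin N => Polynomial.eval t (Polynomial.C (z j) +
        Polynomial.C ((j : ℕ) : ℂ) * Polynomial.X))
        = (fun j : Fin N => z j + ((j : ℕ) : ℂ) * t) := by
      funext j; simp
    rw [hfun]
  -- the bad set of parameters is finite
  set B : Set ℂ := ⋃ p : Fin N × Fin N,
    {t : ℂ | p.1 ≠ p.2 ∧ z p.1 + ((p.1 : ℕ) : ℂ) * t = z p.2 + ((p.2 : ℕ) : ℂ) * t} with hB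
  have hBfin : B.Finite := by
    apply Set.finite_iUnion
    intro p
    apply Set.Subsingleton.finite
    intro t ht t' ht'
    obtain ⟨hne, he⟩ := ht
    obtain ⟨_, he'⟩ := ht'
    have hcne : ((p.1 : ℕ) : ℂ) ≠ ((p.2 : ℕ) : ℂ) := by
      intro hcon
      exact hne (Fin.ext (Nat.cast_injective hcon))
    have e1 : t * (((p.1 : ℕ) : ℂ) - ((p.2 : ℕ) : ℂ)) = z p.2 - z p.1 := by
      linear_combination he
    have e2 : t' * (((p.1 : ℕ) : ℂ) - ((p.2 : ℕ) : ℂ)) = z p.2 - z p.1 := by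
      linear_combination he'
    exact mul_right_cancel₀ (sub_ne_zero.mpr hcne) (e1.trans e2.symm)
  have hP0 : P = 0 := by
    apply Polynomial.eq_zero_of_infinite_isRoot
    apply Set.Infinite.mono (s := Bᶜ)
    · intro t ht
      have hdist : ∀ j k : Fin N, n ≤ (j : ℕ) → n ≤ (k : ℕ) → j ≠ k →
          z j + ((j : ℕ) : ℂ) * t ≠ z k + ((k : ℕ) : ℂ) * t := by
        intro j k _ _ hjk hcon
        exact ht (Set.mem_iUnion.mpr ⟨(j, k), hjk, hcon⟩)
      have := key (fun j => z j + ((j : ℕ) : ℂ) * t) hdist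
      show Polynomial.IsRoot P t
      rw [Polynomial.IsRoot, hPev t, map_sub, this, sub_self]
    · exact hBfin.infinite_compl
  have := hPev 0
  rw [hP0] at this
  simp only [Polynomial.eval_zero] at this
  have hz0 : (fun j : Fin N => z j + ((j : ℕ) : ℂ) * 0) = z := by
    funext j; ring
  rw [hz0, map_sub] at this
  exact sub_eq_zero.mp this.symm
end

section
/- Let n=l (so N=2n). The rational-function sum Δ⁰(x|z) := Σ_{k=n}^{N} [∏_{j=1}^{n−1}(z_k − z_j q⁻²) / ∏_{i=n,i≠k}^{N}(z_i − z_k)q⁻¹] · Δ(x₁,…,x_m | z₁,…,z_{n−1},z_k | z_n,…,ẑ_k,…,z_N), where Δ is any polynomial symmetric in its first block of z-arguments and in its second block, has no poles at z_i=z_k: the apparent simple poles at z_i=z_k cancel between the i-th and k-th summands, so Δ⁰ is a polynomial in z₁,…,z_N. -/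
/-!
Multiplying the sum by the Vandermonde determinant `V` of the variables `z_k` with `n - 1 ≤ k`
turns it, by Laplace expansion along the first column, into the determinant `G` of the Vandermonde
matrix whose column of ones is replaced by the numerators. If `z_a = z_b`, the symmetry of `Δ` in
its last block makes rows `a` and `b` of this matrix equal, so `G` vanishes on every diagonal
`z_a = z_b`. Hence `G` is divisible by `V = ∏ (z_b - z_a)`, and the quotient is the required
polynomial.
-/

open Finset MvPolynomial Matrix

namespace MvPolynomial

variable {R σ : Type*} [CommRing R]

theorem X_sub_X_dvd_of_rename_update_eq_zero [DecidableEq σ] {a b : σ} {f : MvPolynomial σ R}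
    (hf : rename (Function.update id a b) f = 0) : X a - X b ∣ f := by
  set I := Ideal.span {(X a - X b : MvPolynomial σ R)}
  -- renaming `a` to `b` is the identity modulo `X a - X b`
  have hmk : (Ideal.Quotient.mkₐ R I).comp (rename (Function.update id a b)) =
      Ideal.Quotient.mkₐ R I := by
    ext i
    by_cases hi : i = a
    · subst hi
      simp only [AlgHom.comp_apply, rename_X, Function.update_self, Ideal.Quotient.mkₐ_eq_mk,
        Ideal.Quotient.eq, I, Ideal.mem_span_singleton]
      exact ⟨-1, by ring⟩
    · simp [hi]
  rw [← Ideal.mem_span_singleton, ← Ideal.Quotient.eq_zero_iff_mem]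
  simpa [hf] using (DFunLike.congr_fun hmk f).symm

theorem rename_update_eq_zero_of_eval_eq_zero [DecidableEq σ] [IsDomain R] [Infinite R]
    {a b : σ} {f : MvPolynomial σ R} (hf : ∀ v : σ → R, v a = v b → eval v f = 0) :
    rename (Function.update id a b) f = 0 :=
  funext fun v => by
    rw [eval_rename, map_zero]
    refine hf _ ?_
    by_cases hba : b = a
    · subst hba; rfl
    · simp [Function.update_of_ne hba]

theorem prod_X_sub_X_dvd [DecidableEq σ] [IsDomain R] {ι : Type*} {s : Finset ι} {a b : ι → σ}
    (hs : (s : Set ι).Pairwise fun k l =>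
      rename (Function.update id (a l) (b l)) (X (a k) - X (b k) : MvPolynomial σ R) ≠ 0)
    {f : MvPolynomial σ R} (hf : ∀ k ∈ s, rename (Function.update id (a k) (b k)) f = 0) :
    ∏ k ∈ s, (X (a k) - X (b k)) ∣ f := by
  classical
  induction s using Finset.induction_on generalizing f with
  | empty => simp
  | insert k s hk ih =>
    obtain ⟨g, rfl⟩ := X_sub_X_dvd_of_rename_update_eq_zero (hf k (mem_insert_self k s))
    rw [prod_insert hk]
    refine mul_dvd_mul_left _ (ih (hs.mono (by simp)) fun l hl => ?_)
    have hkl : k ≠ l := fun h => hk (h ▸ hl)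
    have hfl := hf l (mem_insert_of_mem hl)
    rw [map_mul] at hfl
    exact (mul_eq_zero.1 hfl).resolve_left (hs (by simp) (by simp [hl]) hkl)

theorem det_vandermonde_X_dvd [IsDomain R] [Infinite R] {r : ℕ} {ι : Fin r → σ}
    (hι : Function.Injective ι) {f : MvPolynomial σ R}
    (hf : ∀ i j, i < j → ∀ v : σ → R, v (ι i) = v (ι j) → eval v f = 0) :
    (vandermonde (X ∘ ι)).det ∣ f := by
  classical
  rw [det_vandermonde, prod_sigma']
  refine prod_X_sub_X_dvd ?_ fun p hp => rename_update_eq_zero_of_eval_eq_zero fun v hv =>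
    hf p.1 p.2 (by simpa using hp) v hv.symm
  rintro ⟨i, j⟩ hij ⟨k, l⟩ hkl hne
  simp only [coe_sigma, Set.mem_sigma_iff, coe_univ, Set.mem_univ, coe_Ioi, Set.mem_Ioi,
    true_and] at hij hkl
  have hne' : ¬(i = k ∧ j = l) := by simpa using hne
  simp only [map_sub, rename_X, Function.update_apply, id, ne_eq, sub_eq_zero,
    X_injective.eq_iff, hι.eq_iff]
  split_ifs <;> grind

end MvPolynomial

namespace Matrix

variable {R : Type*} [CommRing R] {r : ℕ}

/-- The columns are `c, 1, z, …, z ^ (r - 1)`. -/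
def vandermondeCons (c z : Fin (r + 1) → R) : Matrix (Fin (r + 1)) (Fin (r + 1)) R :=
  of fun i => Fin.cons (c i) fun j : Fin r => z i ^ (j : ℕ)

theorem det_vandermondeCons (c z : Fin (r + 1) → R) :
    (vandermondeCons c z).det =
      ∑ k : Fin (r + 1), (-1) ^ (k : ℕ) * c k * (vandermonde (z ∘ k.succAbove)).det := by
  rw [det_succ_column_zero]
  rfl

theorem _root_.RingHom.map_det_vandermondeCons {S : Type*} [CommRing S] (f : R →+* S)
    (c z : Fin (r + 1) → R) :
    f (vandermondeCons c z).det = (vandermondeCons (f ∘ c) (f ∘ z)).det := by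
  rw [RingHom.map_det]
  congr 1
  ext i j
  cases j using Fin.cases <;> simp [vandermondeCons]

theorem det_vandermonde_cons (t : R) (v : Fin r → R) :
    (vandermonde (Fin.cons t v : Fin (r + 1) → R)).det =
      (∏ i, (v i - t)) * (vandermonde v).det := by
  rw [det_vandermonde, det_vandermonde, Fin.prod_univ_succ]
  simp [Fin.Ioi_zero_eq_map, Fin.prod_Ioi_succ]

theorem det_vandermonde_eq_mul_det_succAbove (z : Fin (r + 1) → R) (k : Fin (r + 1)) :
    (vandermonde z).det =
      (-1) ^ (k : ℕ) * (∏ i, (z (k.succAbove i) - z k)) *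
        (vandermonde (z ∘ k.succAbove)).det := by
  have hz : z ∘ k.cycleRange.symm = Fin.cons (z k) (z ∘ k.succAbove) := by
    ext i
    cases i using Fin.cases <;> simp [Fin.cycleRange_symm_zero, Fin.cycleRange_symm_succ]
  have hperm := det_permute k.cycleRange.symm (vandermonde z)
  change (vandermonde (z ∘ k.cycleRange.symm)).det = _ at hperm
  rw [Equiv.Perm.sign_symm, Fin.sign_cycleRange, hz, det_vandermonde_cons] at hperm
  push_cast at hperm
  simp only [Function.comp_apply] at hperm
  rw [mul_assoc, hperm, ← mul_assoc, ← mul_pow, neg_one_mul, neg_neg, one_pow, one_mul]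

theorem sum_div_prod_sub_eq_det_div {K : Type*} [Field K] (c z : Fin (r + 1) → K)
    (hz : Function.Injective z) :
    ∑ k, c k / ∏ i, (z (k.succAbove i) - z k) =
      (vandermondeCons c z).det / (vandermonde z).det := by
  rw [det_vandermondeCons, sum_div]
  refine sum_congr rfl fun k _ => ?_
  have hP : ∏ i, (z (k.succAbove i) - z k) ≠ 0 :=
    prod_ne_zero_iff.2 fun i _ => sub_ne_zero.2 (hz.ne (k.succAbove_ne i))
  have hV : (vandermonde (z ∘ k.succAbove)).det ≠ 0 :=
    det_vandermonde_ne_zero_iff.2 (hz.comp Fin.succAbove_right_injective)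
  rw [det_vandermonde_eq_mul_det_succAbove z k]
  field_simp

end Matrix

theorem exists_eval_eq_sum_div_prod_sub {K σ : Type*} [Field K] [Infinite K] {r : ℕ}
    {ι : Fin (r + 1) → σ} (hι : Function.Injective ι) (c : Fin (r + 1) → MvPolynomial σ K)
    (hc : ∀ a b, ∀ v : σ → K, v (ι a) = v (ι b) → eval v (c a) = eval v (c b)) :
    ∃ Q : MvPolynomial σ K, ∀ v : σ → K, Function.Injective (v ∘ ι) →
      ∑ k, eval v (c k) / ∏ i, (v (ι (k.succAbove i)) - v (ι k)) = eval v Q := by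
  have heval (v : σ → K) : eval v (vandermondeCons c (X ∘ ι)).det =
      (vandermondeCons (fun k => eval v (c k)) (v ∘ ι)).det := by
    simp only [RingHom.map_det_vandermondeCons, Function.comp_def, eval_X]
  obtain ⟨Q, hQ⟩ : (vandermonde (X ∘ ι)).det ∣ (vandermondeCons c (X ∘ ι)).det := by
    refine det_vandermonde_X_dvd hι fun a b hab v hv => ?_
    rw [heval]
    refine det_zero_of_row_eq hab.ne (funext fun j => ?_)
    cases j using Fin.cases <;> simp [vandermondeCons, hc a b v hv, hv]
  refine ⟨Q, fun v hv => ?_⟩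
  have hV : eval v (vandermonde (X ∘ ι)).det = (vandermonde (v ∘ ι)).det := by
    rw [RingHom.map_det]
    congr 1
    ext i j
    simp
  refine (sum_div_prod_sub_eq_det_div (fun k => eval v (c k)) (v ∘ ι) hv).trans ?_
  rw [← heval, hQ, map_mul, hV, mul_div_cancel_left₀ _ (det_vandermonde_ne_zero_iff.2 hv)]

namespace Fin

theorem exists_perm_comp_succAbove_eq {α : Type*} {r : ℕ} (f : Fin (r + 1) → α)
    {a b : Fin (r + 1)} (h : f a = f b) :
    ∃ σ : Equiv.Perm (Fin r), (f ∘ b.succAbove) ∘ σ = f ∘ a.succAbove := by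
  have hsucc (y : {x // x ≠ b}) : b.succAbove ((finSuccAboveEquiv b).symm y) = y :=
    congrArg Subtype.val ((finSuccAboveEquiv b).apply_symm_apply y)
  refine ⟨(finSuccAboveEquiv a).trans <| ((Equiv.swap a b).subtypeEquiv fun x => ?_).trans
    (finSuccAboveEquiv b).symm, funext fun j => ?_⟩
  · rw [Ne, Ne, Equiv.swap_apply_eq_iff, Equiv.swap_apply_right]
  · simp only [Function.comp_apply, Equiv.trans_apply, finSuccAboveEquiv_apply, hsucc,
      Equiv.subtypeEquiv_apply, Equiv.swap_apply_def]
    split_ifs <;> simp_all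

theorem univ_erase_eq_map_succAboveEmb {r : ℕ} (k : Fin (r + 1)) :
    univ.erase k = univ.map k.succAboveEmb := by
  conv_lhs => rw [univ_succAbove r k]
  exact erase_cons _

end Fin

section LastBlock

variable {a N : ℕ}

def lastBlockEmb {r : ℕ} (h : a + r = N) : Fin r ↪ Fin N :=
  (Fin.natAddEmb a).trans (Fin.castLEEmb h.le)

@[simp]
theorem val_lastBlockEmb {r : ℕ} (h : a + r = N) (k : Fin r) : (lastBlockEmb h k : ℕ) = a + k := rfl

theorem filter_le_eq_map_lastBlockEmb {r : ℕ} (h : a + r = N) :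
    univ.filter (fun i : Fin N => a ≤ (i : ℕ)) = univ.map (lastBlockEmb h) := by
  ext i
  simp only [mem_filter, mem_univ, true_and, mem_map]
  refine ⟨fun hi => ⟨⟨i - a, by omega⟩, Fin.ext ?_⟩, ?_⟩
  · simp only [val_lastBlockEmb]
    omega
  · rintro ⟨j, -, rfl⟩
    simp

theorem filter_le_and_ne_eq_map_lastBlockEmb {r : ℕ} (h : a + (r + 1) = N) (k : Fin (r + 1)) :
    univ.filter (fun i : Fin N => a ≤ (i : ℕ) ∧ i ≠ lastBlockEmb h k) =
      univ.map (k.succAboveEmb.trans (lastBlockEmb h)) := by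
  rw [← filter_filter, filter_ne', filter_le_eq_map_lastBlockEmb h, ← map_erase,
    Fin.univ_erase_eq_map_succAboveEmb, Finset.map_map]

end LastBlock

section Summand

variable {m n N : ℕ} (hK : n - 1 + (n + 1) = N)

theorem comp_lastBlockEmb_succAbove {α : Type*} (z : Fin N → α) (k : Fin (n + 1)) :
    (fun j : Fin n => if _ : n - 1 + (j : ℕ) < lastBlockEmb hK k then z ⟨n - 1 + j, by omega⟩
      else z ⟨n + j, by omega⟩) = z ∘ lastBlockEmb hK ∘ k.succAbove := by
  funext j
  rcases lt_or_ge (j : ℕ) k with hjk | hjk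
  · rw [dif_pos (by simpa using hjk), Function.comp_apply, Function.comp_apply,
      Fin.succAbove_of_castSucc_lt _ _ (by simpa [Fin.lt_def] using hjk)]
    exact congrArg z (Fin.ext (by simp))
  · rw [dif_neg (by simpa using hjk), Function.comp_apply, Function.comp_apply,
      Fin.succAbove_of_le_castSucc _ _ (by simpa [Fin.le_def] using hjk)]
    exact congrArg z (Fin.ext (by simp; omega))

def firstBlockIdx (k : Fin (n + 1)) (j : Fin n) : Fin N :=
  if (j : ℕ) < n - 1 then ⟨j, by omega⟩ else lastBlockEmb hK k

theorem comp_firstBlockIdx {α : Type*} (z : Fin N → α) (k : Fin (n + 1)) :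
    z ∘ firstBlockIdx hK k =
      fun j : Fin n => if _ : (j : ℕ) < n - 1 then z ⟨j, by omega⟩ else z (lastBlockEmb hK k) := by
  funext j
  simp only [firstBlockIdx, Function.comp_apply]
  split_ifs <;> rfl

/-- The factor `q ^ n` absorbs the `n` factors `q⁻¹` of the denominator. -/
noncomputable def summandNumerator (q : ℂ) (P : MvPolynomial (Fin m ⊕ Fin n ⊕ Fin n) ℂ)
    (k : Fin (n + 1)) : MvPolynomial (Fin m ⊕ Fin N) ℂ :=
  C (q ^ n) *
    (∏ j : Fin (n - 1), (X (.inr (lastBlockEmb hK k)) - X (.inr ⟨j, by omega⟩) * C (q ^ 2)⁻¹)) *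
      rename (Sum.elim .inl (Sum.elim (.inr ∘ firstBlockIdx hK k)
        (.inr ∘ lastBlockEmb hK ∘ k.succAbove))) P

variable {q : ℂ} {P : MvPolynomial (Fin m ⊕ Fin n ⊕ Fin n) ℂ}
  {Δ : (Fin m → ℂ) → (Fin n → ℂ) → (Fin n → ℂ) → ℂ}

theorem eval_summandNumerator
    (hP : ∀ x w u, Δ x w u = eval (Sum.elim x (Sum.elim w u)) P)
    (v : Fin m ⊕ Fin N → ℂ) (k : Fin (n + 1)) :
    eval v (summandNumerator hK q P k) =
      q ^ n *
        (∏ j : Fin (n - 1), (v (.inr (lastBlockEmb hK k)) - v (.inr ⟨j, by omega⟩) * (q ^ 2)⁻¹)) *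
        Δ (v ∘ .inl) (v ∘ .inr ∘ firstBlockIdx hK k)
          (v ∘ .inr ∘ lastBlockEmb hK ∘ k.succAbove) := by
  simp [summandNumerator, eval_rename, hP, Sum.comp_elim]

theorem eval_summandNumerator_eq_of_eq
    (hP : ∀ x w u, Δ x w u = eval (Sum.elim x (Sum.elim w u)) P)
    (hsymu : ∀ x w u (s : Equiv.Perm (Fin n)), Δ x w (u ∘ s) = Δ x w u)
    {a b : Fin (n + 1)} {v : Fin m ⊕ Fin N → ℂ}
    (hv : v (.inr (lastBlockEmb hK a)) = v (.inr (lastBlockEmb hK b))) :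
    eval v (summandNumerator hK q P a) = eval v (summandNumerator hK q P b) := by
  obtain ⟨σ, hσ⟩ := Fin.exists_perm_comp_succAbove_eq (v ∘ .inr ∘ lastBlockEmb hK) hv
  have hu : (v ∘ .inr ∘ lastBlockEmb hK ∘ b.succAbove) ∘ σ =
      v ∘ .inr ∘ lastBlockEmb hK ∘ a.succAbove := hσ
  have hw : v ∘ .inr ∘ firstBlockIdx hK a = v ∘ .inr ∘ firstBlockIdx hK b := by
    funext j
    simp only [firstBlockIdx, Function.comp_apply]
    split_ifs
    exacts [rfl, hv]
  rw [eval_summandNumerator hK hP, eval_summandNumerator hK hP, hw, ← hu, hsymu, hv]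

end Summand

/-- Spurious-pole cancellation: the rational sum defining Δ⁰ (the image of
⟨Δ^{(nn)}⟩ under f₀) is in fact given by a polynomial in z₁,…,z_N. -/
theorem stmt_12 (q : ℂ) (hq : q ≠ 0) (m n N : ℕ) (hn : 0 < n) (hN : N = 2 * n)
    (Δ : (Fin m → ℂ) → (Fin n → ℂ) → (Fin n → ℂ) → ℂ)
    (hpoly : ∃ P : MvPolynomial (Fin m ⊕ Fin n ⊕ Fin n) ℂ,
      ∀ x w u, Δ x w u = MvPolynomial.eval (Sum.elim x (Sum.elim w u)) P)
    (hsymu : ∀ x w u (s : Equiv.Perm (Fin n)), Δ x w (u ∘ s) = Δ x w u) :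
    ∃ Q : MvPolynomial (Fin m ⊕ Fin N) ℂ,
      ∀ (x : Fin m → ℂ) (z : Fin N → ℂ),
        (∀ i k : Fin N, n - 1 ≤ (i : ℕ) → n - 1 ≤ (k : ℕ) → i ≠ k → z i ≠ z k) →
        (∑ k ∈ Finset.univ.filter (fun k : Fin N => n - 1 ≤ (k : ℕ)),
          ((∏ j : Fin (n - 1), (z k - z ⟨(j : ℕ), by omega⟩ * (q ^ 2)⁻¹)) /
            (∏ i ∈ Finset.univ.filter (fun i : Fin N => n - 1 ≤ (i : ℕ) ∧ i ≠ k),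
              ((z i - z k) * q⁻¹)))
          * Δ x
              (fun j => if h : (j : ℕ) < n - 1 then z ⟨(j : ℕ), by omega⟩ else z k)
              (fun j => if h : n - 1 + (j : ℕ) < (k : ℕ)
                then z ⟨n - 1 + (j : ℕ), by omega⟩
                else z ⟨n + (j : ℕ), by omega⟩))
        = MvPolynomial.eval (Sum.elim x z) Q := by
  obtain ⟨P, hP⟩ := hpoly
  have hK : n - 1 + (n + 1) = N := by omega
  have hι : Function.Injective (Sum.inr ∘ lastBlockEmb hK : Fin (n + 1) → Fin m ⊕ Fin N) :=
    Sum.inr_injective.comp (lastBlockEmb hK).injective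
  obtain ⟨Q, hQ⟩ := exists_eval_eq_sum_div_prod_sub hι (summandNumerator hK q P)
    fun a b v hv => eval_summandNumerator_eq_of_eq hK hP hsymu hv
  refine ⟨Q, fun x z hz => ?_⟩
  have hzinj : Function.Injective (Sum.elim x z ∘ Sum.inr ∘ lastBlockEmb hK) := fun a b hab => by
    by_contra hne
    exact hz _ _ (by simp) (by simp) ((lastBlockEmb hK).injective.ne hne) hab
  rw [← hQ _ hzinj, filter_le_eq_map_lastBlockEmb hK, sum_map]
  refine sum_congr rfl fun k _ => ?_
  rw [filter_le_and_ne_eq_map_lastBlockEmb hK, prod_map, comp_lastBlockEmb_succAbove hK,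
    ← comp_firstBlockIdx hK, eval_summandNumerator hK hP]
  simp only [prod_mul_distrib, prod_const, card_univ, Fintype.card_fin, inv_pow, Sum.elim_inr,
    Sum.elim_comp_inl, Function.comp_apply, Function.Embedding.trans_apply, Fin.coe_succAboveEmb,
    ← Function.comp_assoc, Sum.elim_comp_inr]
  field_simp
end
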